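/- arXiv:1310.6057 — 6 statements merged into one kernel-verified Lean document; each statement's English description precedes it below -/
import Mathlib

section
/- Let p be an odd prime, r ≥ 1, R = ℤ/p^rℤ, and ζ a primitive p^r-th root of unity. Let A ⊆ R \ {0}. Then {ζ^a : a ∈ A} is a ℤ-basis of ℤ[ζ] if and only if the canonical projection π : R → ℤ/p^{r-1}ℤ restricts to a bijection from the complement of A in R onto ℤ/p^{r-1}ℤ. -/
/-!
The powers `ζ ^ a` (`a : ZMod n`) span `ℤ[ζ]`, a free `ℤ`-module of rank `φ(n)`, and for
`d ∣ n`, `d < n` the sum of `ζ ^ x` over any fibre of `ZMod n → ZMod d` vanishes: the fibre is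
stable under `x ↦ x + d`, which multiplies the sum by `ζ ^ d ≠ 1`. For `n = p ^ r`,
`d = p ^ (r - 1)` we have `φ(n) = n - d`, i.e. `|A|` is the rank exactly when `|Aᶜ| = d`.
If the `ζ ^ a`, `a ∈ A`, are independent, no fibre lies inside `A`, so `Aᶜ` meets every fibre
and, having `d` elements, meets each exactly once. Conversely, if `Aᶜ` meets each fibre once,
the fibre relation writes each missing `ζ ^ c` through the `ζ ^ a`, `a ∈ A`; a spanning family
of rank-many vectors in a free `ℤ`-module is a basis.
-/

open Module Polynomial Set

namespace IsPrimitiveRoot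

section CommMonoid

variable {M : Type*} [CommMonoid M] {n : ℕ} {ζ : M}

theorem pow_mod (hζ : IsPrimitiveRoot ζ n) (m : ℕ) : ζ ^ (m % n) = ζ ^ m := by
  rw [hζ.eq_orderOf, pow_mod_orderOf]

theorem pow_val_natCast (hζ : IsPrimitiveRoot ζ n) (m : ℕ) : ζ ^ (m : ZMod n).val = ζ ^ m := by
  rw [ZMod.val_natCast, hζ.pow_mod]

theorem pow_val_add [NeZero n] (hζ : IsPrimitiveRoot ζ n) (a b : ZMod n) :
    ζ ^ (a + b).val = ζ ^ a.val * ζ ^ b.val := by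
  rw [ZMod.val_add, hζ.pow_mod, pow_add]

end CommMonoid

section CommRing

variable {R : Type*} [CommRing R] {n : ℕ} {ζ : R}

theorem span_range_pow_val (hζ : IsPrimitiveRoot ζ n) :
    Submodule.span ℤ (range fun a : ZMod n => ζ ^ a.val) =
      Subalgebra.toSubmodule (Algebra.adjoin ℤ {ζ}) := by
  apply le_antisymm
  · rw [Submodule.span_le]
    rintro - ⟨a, rfl⟩
    exact Subalgebra.pow_mem _ (Algebra.self_mem_adjoin_singleton ℤ ζ) _
  · intro x hx
    rw [Subalgebra.mem_toSubmodule, Algebra.adjoin_singleton_eq_range_aeval] at hx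
    obtain ⟨P, rfl⟩ := hx
    rw [AlgHom.toRingHom_eq_coe, RingHom.coe_coe, aeval_eq_sum_range]
    refine Submodule.sum_mem _ fun i _ => Submodule.smul_mem _ _ ?_
    exact Submodule.subset_span ⟨i, hζ.pow_val_natCast i⟩

variable [IsDomain R]

theorem sum_pow_val_fiber_eq_zero [NeZero n] (hζ : IsPrimitiveRoot ζ n) {d : ℕ} (hd : d ∣ n)
    (hdn : d < n) (c : ZMod n) :
    ∑ x with ZMod.castHom hd (ZMod d) x = ZMod.castHom hd (ZMod d) c, ζ ^ x.val = 0 := by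
  set π := ZMod.castHom hd (ZMod d)
  have hπd : π d = 0 := by rw [map_natCast, ZMod.natCast_self]
  have hζd : ζ ^ d ≠ 1 := hζ.pow_ne_one_of_pos_of_lt (ne_zero_of_dvd_ne_zero (NeZero.ne n) hd) hdn
  set S := ∑ x with π x = π c, ζ ^ x.val
  have hshift : ζ ^ d * S = S := by
    rw [Finset.mul_sum]
    refine Finset.sum_nbij' (· + d) (· - d) ?_ ?_ (fun _ _ => add_sub_cancel_right _ _)
      (fun _ _ => sub_add_cancel _ _) fun a _ => ?_
    · simp [hπd]
    · simp [hπd]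
    · rw [hζ.pow_val_add, hζ.pow_val_natCast, mul_comm]
  exact (mul_left_eq_self₀.1 hshift).resolve_left hζd

variable [NeZero n] {d : ℕ} (hd : d ∣ n)

theorem surjOn_castHom_compl_of_linearIndepOn (hζ : IsPrimitiveRoot ζ n) (hdn : d < n)
    {A : Set (ZMod n)} (hA : LinearIndepOn ℤ (fun a : ZMod n => ζ ^ a.val) A) :
    SurjOn (ZMod.castHom hd (ZMod d)) Aᶜ univ := by
  rintro b -
  obtain ⟨c, rfl⟩ := ZMod.castHom_surjective hd b
  by_contra hfiber
  set F := Finset.univ.filter fun x => ZMod.castHom hd (ZMod d) x = ZMod.castHom hd (ZMod d) c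
  have hFA : (F : Set (ZMod n)) ⊆ A := fun x hx => by
    by_contra hxA
    exact hfiber ⟨x, hxA, (Finset.mem_filter.1 hx).2⟩
  have hsum : ∑ x ∈ F, (1 : ZMod n → ℤ) x • ζ ^ x.val = 0 := by
    simpa only [Pi.one_apply, one_smul] using hζ.sum_pow_val_fiber_eq_zero hd hdn c
  exact one_ne_zero <| linearIndepOn_finset_iff.1 (hA.mono hFA) 1 hsum c
    (Finset.mem_filter.2 ⟨Finset.mem_univ c, rfl⟩)

theorem span_image_pow_val_eq_adjoin_of_injOn (hζ : IsPrimitiveRoot ζ n) (hdn : d < n)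
    {A : Set (ZMod n)} (hA : InjOn (ZMod.castHom hd (ZMod d)) Aᶜ) :
    Submodule.span ℤ ((fun a : ZMod n => ζ ^ a.val) '' A) =
      Subalgebra.toSubmodule (Algebra.adjoin ℤ {ζ}) := by
  rw [← hζ.span_range_pow_val]
  refine le_antisymm (Submodule.span_mono (image_subset_range _ _)) ?_
  rw [Submodule.span_le]
  rintro - ⟨c, rfl⟩
  by_cases hc : c ∈ A
  · exact Submodule.subset_span (mem_image_of_mem _ hc)
  set F := Finset.univ.filter fun x => ZMod.castHom hd (ZMod d) x = ZMod.castHom hd (ZMod d) c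
  have hfiber : ∑ x ∈ F, ζ ^ x.val = 0 := hζ.sum_pow_val_fiber_eq_zero hd hdn c
  rw [← Finset.add_sum_erase F _ (Finset.mem_filter.2 ⟨Finset.mem_univ c, rfl⟩),
    add_eq_zero_iff_eq_neg] at hfiber
  change ζ ^ c.val ∈ _
  rw [hfiber]
  refine Submodule.neg_mem _ (Submodule.sum_mem _ fun x hx => Submodule.subset_span ?_)
  refine mem_image_of_mem _ (not_not.1 fun hxA => ?_)
  obtain ⟨hxc, hx⟩ := Finset.mem_erase.1 hx
  exact hxc (hA hxA hc (Finset.mem_filter.1 hx).2)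

end CommRing

section Field

variable {K : Type*} [Field K] [CharZero K] {n : ℕ} {ζ : K}

theorem finrank_adjoin (hζ : IsPrimitiveRoot ζ n) (hn : 0 < n) :
    finrank ℤ (Algebra.adjoin ℤ {ζ}) = n.totient := by
  rw [(Algebra.adjoin.powerBasis' (hζ.isIntegral hn)).finrank, Algebra.adjoin.powerBasis'_dim,
    ← cyclotomic_eq_minpoly hζ hn, natDegree_cyclotomic]

variable [NeZero n] {d : ℕ} (hd : d ∣ n)

theorem linearIndependent_iff_ncard_eq_totient (hζ : IsPrimitiveRoot ζ n)
    {A : Set (ZMod n)} (hspan : Submodule.span ℤ ((fun a : ZMod n => ζ ^ a.val) '' A) =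
      Subalgebra.toSubmodule (Algebra.adjoin ℤ {ζ})) :
    LinearIndependent ℤ (fun a : A => ζ ^ (a : ZMod n).val) ↔ A.ncard = n.totient := by
  classical
  rw [linearIndependent_iff_card_eq_finrank_span, Set.finrank,
    ← image_eq_range (fun a : ZMod n => ζ ^ a.val), hspan, Subalgebra.finrank_toSubmodule,
    hζ.finrank_adjoin (NeZero.pos n), ← Nat.card_coe_set_eq, Nat.card_eq_fintype_card]

theorem linearIndependent_and_span_eq_adjoin_iff_bijOn (hζ : IsPrimitiveRoot ζ n)
    (hφ : n.totient + d = n) (A : Set (ZMod n)) :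
    (LinearIndependent ℤ (fun a : A => ζ ^ (a : ZMod n).val) ∧
      Submodule.span ℤ ((fun a : ZMod n => ζ ^ a.val) '' A) =
        Subalgebra.toSubmodule (Algebra.adjoin ℤ {ζ})) ↔
    BijOn (ZMod.castHom hd (ZMod d)) Aᶜ univ := by
  have hdn : d < n := by have := Nat.totient_pos.2 (NeZero.pos n); omega
  have hcard : A.ncard + Aᶜ.ncard = n := by rw [ncard_add_ncard_compl, Nat.card_zmod]
  constructor
  · rintro ⟨hli, hspan⟩
    have hA := (hζ.linearIndependent_iff_ncard_eq_totient hspan).1 hli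
    have hsurj := hζ.surjOn_castHom_compl_of_linearIndepOn hd hdn hli
    refine ⟨mapsTo_univ _ _, ?_, hsurj⟩
    rw [injOn_iff_injective]
    refine ((Nat.bijective_iff_surjective_and_card _).2 ⟨surjOn_iff_surjective.1 hsurj, ?_⟩).1
    rw [Nat.card_coe_set_eq, Nat.card_zmod]
    omega
  · intro hbij
    have hAc : Aᶜ.ncard = d := by rw [hbij.ncard_eq, ncard_univ, Nat.card_zmod]
    have hspan := hζ.span_image_pow_val_eq_adjoin_of_injOn hd hdn hbij.injOn
    exact ⟨(hζ.linearIndependent_iff_ncard_eq_totient hspan).2 (by omega), hspan⟩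

end Field

end IsPrimitiveRoot

theorem stmt1_general (p r : ℕ) (hp : p.Prime) (hr : 1 ≤ r)
    (ζ : ℂ) (hζ : IsPrimitiveRoot ζ (p ^ r))
    (A : Set (ZMod (p ^ r))) :
    (LinearIndependent ℤ (fun a : A => ζ ^ (a : ZMod (p ^ r)).val) ∧
      Submodule.span ℤ ((fun a : ZMod (p ^ r) => ζ ^ a.val) '' A) =
        Subalgebra.toSubmodule (Algebra.adjoin ℤ ({ζ} : Set ℂ))) ↔
    Set.BijOn (ZMod.castHom (pow_dvd_pow p (Nat.sub_le r 1)) (ZMod (p ^ (r - 1))))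
      Aᶜ Set.univ := by
  have : NeZero (p ^ r) := ⟨pow_ne_zero r hp.ne_zero⟩
  refine hζ.linearIndependent_and_span_eq_adjoin_iff_bijOn _ ?_ A
  rw [Nat.totient_prime_pow hp hr, ← Nat.mul_add_one, Nat.sub_add_cancel hp.one_le, ← pow_succ,
    Nat.sub_add_cancel hr]

/-- Let `p` be an odd prime, `r ≥ 1`, `R = ℤ/p^rℤ` and `ζ` a primitive
`p^r`-th root of unity. For `A ⊆ R \ {0}`, the family `{ζ^a : a ∈ A}` is a
`ℤ`-basis of `ℤ[ζ]` if and only if the canonical projection `π : R → ℤ/p^(r−1)ℤ`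
restricts to a bijection from the complement of `A` onto `ℤ/p^(r−1)ℤ`. -/
theorem stmt1 (p r : ℕ) (hp : p.Prime) (hodd : Odd p) (hr : 1 ≤ r)
    (ζ : ℂ) (hζ : IsPrimitiveRoot ζ (p ^ r))
    (A : Set (ZMod (p ^ r))) (hA : (0 : ZMod (p ^ r)) ∉ A) :
    (LinearIndependent ℤ (fun a : A => ζ ^ (a : ZMod (p ^ r)).val) ∧
      Submodule.span ℤ ((fun a : ZMod (p ^ r) => ζ ^ a.val) '' A) =
        Subalgebra.toSubmodule (Algebra.adjoin ℤ ({ζ} : Set ℂ))) ↔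
    Set.BijOn (ZMod.castHom (pow_dvd_pow p (Nat.sub_le r 1)) (ZMod (p ^ (r - 1))))
      Aᶜ Set.univ :=
  stmt1_general p r hp hr ζ hζ A
end

section
/- Let p be an odd prime, r ≥ 1, R = ℤ/p^rℤ, S = ℤ/p^{r-1}ℤ, and H the unique subgroup of R^× of order e, where e divides p−1. H acts on R and on S by multiplication (via reduction). Let ρ : R/H → S/H be the induced map on orbit spaces. Then for an orbit y ∈ S/H, the fiber ρ^{-1}(y) has cardinality 1 + (p−1)/e if y is the orbit of 0, and cardinality p otherwise. -/
/-!
If `u ∈ H` and `u - 1` is not a unit, then `u - 1` is nilpotent in `ℤ/p^rℤ`, and `u ^ e = 1`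
with `e ∣ p - 1` prime to `p` forces `u = 1`. Hence `H` acts freely on the nonzero elements of
`R` and of `S`. Over a nonzero `y`, every orbit lying over `H y` meets the fibre `π⁻¹(y)` exactly
once, so there are `|π⁻¹(y)| = p` of them. Over `0`, the kernel of `π` has `p` elements: `{0}` is
one orbit, and the other `p - 1` elements fall into free orbits of size `e`.
-/

/-- The `H`-orbit of `x` in `R = ℤ/p^rℤ`, for `H` a subgroup of `(ℤ/p^rℤ)ˣ` acting
by multiplication. -/
def orbR {m : ℕ} (H : Subgroup (ZMod m)ˣ) (x : ZMod m) : Set (ZMod m) :=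
  Set.range fun h : H => ((h : (ZMod m)ˣ) : ZMod m) * x

theorem eq_one_of_pow_eq_one_of_isNilpotent_sub_one {A : Type*} [CommRing A] {u : A} {n : ℕ}
    (hn : IsUnit (n : A)) (hnil : IsNilpotent (u - 1)) (hu : u ^ n = 1) : u = 1 := by
  -- With `x = u - 1`: `(1 + x) ^ n = 1 + n x + x ^ 2 c`, so `x (n + x c) = 0`, and `n + x c` is a unit.
  obtain ⟨c, hc⟩ := sq_dvd_add_pow_sub_sub (u - 1) 1 n
  have hunit : IsUnit ((n : A) + (u - 1) * c) :=
    (Commute.all _ _).isNilpotent_mul_right hnil |>.isUnit_add_left_of_commute hn (Commute.all _ _)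
  have hzero : (u - 1) * ((n : A) + (u - 1) * c) = 0 := by
    simp only [one_pow, add_sub_cancel, hu] at hc
    linear_combination -hc
  rw [hunit.mul_left_eq_zero, sub_eq_zero] at hzero
  exact hzero

theorem ZMod.isNilpotent_of_not_isUnit {p k : ℕ} (hp : p.Prime) {a : ZMod (p ^ k)}
    (ha : ¬IsUnit a) : IsNilpotent a := by
  have : NeZero (p ^ k) := ⟨pow_ne_zero _ hp.ne_zero⟩
  obtain ⟨c, hc⟩ : p ∣ a.val := by
    by_contra hndvd
    refine ha ?_
    rw [← ZMod.natCast_zmod_val a, ZMod.isUnit_iff_coprime]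
    exact ((hp.coprime_iff_not_dvd.mpr hndvd).symm).pow_right k
  refine ⟨k, ?_⟩
  rw [← ZMod.natCast_zmod_val a, hc, Nat.cast_mul, mul_pow, ← Nat.cast_pow,
    ZMod.natCast_self, zero_mul]

theorem ZMod.unit_eq_one_of_map_mul_eq_self {p r n : ℕ} (hp : p.Prime) (hn : n.Coprime p)
    {u : (ZMod (p ^ r))ˣ} (hu : u ^ n = 1) {T : Type*} [Ring T] (f : ZMod (p ^ r) →+* T)
    {y : T} (hy : y ≠ 0) (hfy : f u * y = y) : u = 1 := by
  have hnonunit : ¬IsUnit ((u : ZMod (p ^ r)) - 1) := fun hunit => by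
    have hmul : f ((u : ZMod (p ^ r)) - 1) * y = 0 := by
      rw [map_sub, map_one, sub_mul, hfy, one_mul, sub_self]
    exact hy ((hunit.map f).mul_right_eq_zero.mp hmul)
  refine Units.ext (eq_one_of_pow_eq_one_of_isNilpotent_sub_one ?_
    (ZMod.isNilpotent_of_not_isUnit hp hnonunit) (by rw [← Units.val_pow_eq_pow_val, hu]; rfl))
  exact (ZMod.isUnit_iff_coprime n _).mpr (hn.pow_right r)

theorem ZMod.subgroup_eq_one_of_map_mul_eq_self {p r e : ℕ} (hp : p.Prime) (hdvd : e ∣ p - 1)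
    {H : Subgroup (ZMod (p ^ r))ˣ} (hH : Nat.card H = e) (h : H) {T : Type*} [Ring T]
    (f : ZMod (p ^ r) →+* T) {z : T} (hz : z ≠ 0)
    (hfz : f ((h : (ZMod (p ^ r))ˣ) : ZMod (p ^ r)) * z = z) : h = 1 := by
  have hcop : e.Coprime p := Nat.Coprime.coprime_dvd_left hdvd
    ((Nat.coprime_self_sub_left hp.one_le).mpr (Nat.coprime_one_left p))
  have hpow : (h : (ZMod (p ^ r))ˣ) ^ e = 1 := by
    rw [← hH, ← Subgroup.coe_pow, pow_card_eq_one', Subgroup.coe_one]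
  exact Subtype.ext (ZMod.unit_eq_one_of_map_mul_eq_self hp hcop hpow f hz hfz)

theorem ZMod.card_preimage_castHom_mul {m n : ℕ} (h : m ∣ n) (z : ZMod m) :
    Nat.card (ZMod.castHom h (ZMod m) ⁻¹' {z}) * m = n := by
  have hsurj : Function.Surjective (ZMod.castHom h (ZMod m)).toAddMonoidHom :=
    ZMod.castHom_surjective h
  have hker := AddSubgroup.card_eq_card_quotient_mul_card_addSubgroup
    (ZMod.castHom h (ZMod m)).toAddMonoidHom.ker
  rw [Nat.card_congr (QuotientAddGroup.quotientKerEquivOfSurjective _ hsurj).toEquiv,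
    Nat.card_zmod, Nat.card_zmod] at hker
  refine (congrArg (· * m)
    (Nat.card_congr (AddMonoidHom.fiberEquivKerOfSurjective hsurj z))).trans ?_
  rw [mul_comm]
  exact hker.symm

open MulAction

section OrbitsIn

variable (G : Type*) {X : Type*} [Group G] [MulAction G X]

def orbitsIn (A : Set X) : Set (Set X) := {O | (∃ x, O = orbit G x) ∧ O ⊆ A}

variable {G} {A : Set X} (hA : ∀ g : G, ∀ x ∈ A, g • x ∈ A)
include hA

theorem orbit_subset_of_mem {x : X} (hx : x ∈ A) : orbit G x ⊆ A := by
  rintro _ ⟨g, rfl⟩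
  exact hA g x hx

theorem orbit_mem_orbitsIn {x : X} (hx : x ∈ A) : orbit G x ∈ orbitsIn G A :=
  ⟨⟨x, rfl⟩, orbit_subset_of_mem hA hx⟩

theorem card_orbitsIn_eq_card_of_transversal {S : Set X} (hSA : S ⊆ A)
    (hmeet : ∀ x ∈ A, ∃ s ∈ S, s ∈ orbit G x)
    (hunique : ∀ s ∈ S, ∀ g : G, g • s ∈ S → g • s = s) :
    Nat.card (orbitsIn G A) = Nat.card S := by
  refine (Nat.card_eq_of_bijective (fun s : S => ⟨orbit G s, orbit_mem_orbitsIn hA (hSA s.2)⟩)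
    ⟨fun s t hst => ?_, fun O => ?_⟩).symm
  · obtain ⟨g, hg⟩ := orbit_eq_iff.mp (congrArg Subtype.val hst)
    have hg : g • (t : X) = s := hg
    exact Subtype.ext (hg.symm.trans (hunique t t.2 g (hg ▸ s.2)))
  · obtain ⟨O, ⟨x, rfl⟩, hO⟩ := O
    obtain ⟨s, hs, hsx⟩ := hmeet x (hO (mem_orbit_self x))
    exact ⟨⟨s, hs⟩, Subtype.ext (orbit_eq_iff.mpr hsx)⟩

theorem card_orbitsIn_mul_card_of_free (hfree : ∀ x ∈ A, ∀ g : G, g • x = x → g = 1) :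
    Nat.card (orbitsIn G A) * Nat.card G = Nat.card A := by
  let f : A → orbitsIn G A := fun a => ⟨orbit G a, orbit_mem_orbitsIn hA a.2⟩
  have hfiber (O : orbitsIn G A) : Nonempty (G ≃ {a // f a = O}) := by
    obtain ⟨O, ⟨x, rfl⟩, hO⟩ := O
    have hx : x ∈ A := hO (mem_orbit_self x)
    refine ⟨Equiv.ofBijective (fun g => ⟨⟨g • x, hA g x hx⟩, Subtype.ext (orbit_smul g x)⟩)
      ⟨fun g g' hgg' => ?_, fun ⟨a, ha⟩ => ?_⟩⟩
    · have hsmul : g • x = g' • x := congrArg (fun a : {a // f a = _} => (a : X)) hgg'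
      have hfix : (g⁻¹ * g') • x = x := by rw [mul_smul, ← hsmul, inv_smul_smul]
      exact inv_mul_eq_one.mp (hfree x hx _ hfix)
    · obtain ⟨g, hg⟩ := orbit_eq_iff.mp (congrArg Subtype.val ha)
      exact ⟨g, Subtype.ext (Subtype.ext hg)⟩
  rw [← Nat.card_prod, ← Nat.card_congr (Equiv.sigmaFiberEquiv f),
    Nat.card_congr (Equiv.sigmaEquivProdOfEquiv fun O => (hfiber O).some.symm)]

theorem card_orbitsIn_insert_of_fixed [Finite X] {x₀ : X} (hx₀ : ∀ g : G, g • x₀ = x₀)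
    (hx₀A : x₀ ∉ A) :
    Nat.card (orbitsIn G (insert x₀ A)) = Nat.card (orbitsIn G A) + 1 := by
  have horbit : orbit G x₀ = {x₀} := Set.ext fun x => by simp [mem_orbit_iff, hx₀, eq_comm]
  have hinsert : orbitsIn G (insert x₀ A) = insert {x₀} (orbitsIn G A) := by
    ext O
    constructor
    · rintro ⟨⟨x, rfl⟩, hO⟩
      rcases hO (mem_orbit_self x) with rfl | hx
      · exact Or.inl horbit
      · exact Or.inr (orbit_mem_orbitsIn hA hx)
    · rintro (rfl | ⟨hO, hOA⟩)
      · exact ⟨⟨x₀, horbit.symm⟩, by simp⟩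
      · exact ⟨hO, hOA.trans (Set.subset_insert x₀ A)⟩
  have hnotMem : {x₀} ∉ orbitsIn G A := fun h => hx₀A (h.2 rfl)
  rw [hinsert, Nat.card_coe_set_eq, Nat.card_coe_set_eq, Set.ncard_insert_of_notMem hnotMem]

end OrbitsIn

abbrev reduceMod (p r : ℕ) : ZMod (p ^ r) →+* ZMod (p ^ (r - 1)) :=
  ZMod.castHom (pow_dvd_pow p (Nat.sub_le r 1)) _

section Reduction

variable {p r e : ℕ} (hp : p.Prime) (hr : 1 ≤ r) (hdvd : e ∣ p - 1)
  {H : Subgroup (ZMod (p ^ r))ˣ} (hH : Nat.card H = e)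

include hp hr

theorem card_preimage_reduceMod (z : ZMod (p ^ (r - 1))) :
    Nat.card (reduceMod p r ⁻¹' {z}) = p :=
  Nat.eq_of_mul_eq_mul_right (pow_pos hp.pos _)
    ((ZMod.card_preimage_castHom_mul _ z).trans (mul_pow_sub_one (by omega) p).symm)

include hdvd hH

theorem card_orbitsIn_preimage_zero :
    Nat.card (orbitsIn H (reduceMod p r ⁻¹' {0})) = 1 + (p - 1) / e := by
  have : NeZero (p ^ r) := ⟨pow_ne_zero _ hp.ne_zero⟩
  have hzero : (0 : ZMod (p ^ r)) ∈ reduceMod p r ⁻¹' {0} := map_zero _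
  set A := reduceMod p r ⁻¹' {0} \ {0} with hAdef
  have hA : ∀ g : H, ∀ x ∈ A, g • x ∈ A := by
    rintro g x ⟨hx, hx0⟩
    refine ⟨show reduceMod p r (((g : (ZMod (p ^ r))ˣ) : ZMod (p ^ r)) * x) = 0 by
      rw [map_mul, Set.mem_preimage.mp hx, mul_zero], (smul_ne_zero_iff_ne g).mpr hx0⟩
  have hfree : ∀ x ∈ A, ∀ g : H, g • x = x → g = 1 := fun x hx g hgx =>
    ZMod.subgroup_eq_one_of_map_mul_eq_self hp hdvd hH g (RingHom.id _) hx.2 hgx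
  have hcardA : Nat.card A = p - 1 := by
    rw [Nat.card_coe_set_eq, hAdef, Set.ncard_sdiff_singleton_of_mem hzero,
      ← Nat.card_coe_set_eq, card_preimage_reduceMod hp hr 0]
  have hcount := card_orbitsIn_mul_card_of_free hA hfree
  rw [hH, hcardA] at hcount
  rw [← Set.insert_eq_of_mem hzero, ← Set.insert_sdiff_singleton, ← hAdef,
    card_orbitsIn_insert_of_fixed hA (smul_zero ·) (fun h => h.2 rfl), add_comm,
    Nat.div_eq_of_eq_mul_left (hH ▸ Nat.card_pos) hcount.symm]

theorem card_orbitsIn_preimage_orbit {y : ZMod (p ^ (r - 1))} (hy : y ≠ 0) :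
    Nat.card (orbitsIn H (reduceMod p r ⁻¹'
      Set.range fun h : H => reduceMod p r ((h : (ZMod (p ^ r))ˣ) : ZMod (p ^ r)) * y)) = p := by
  set π := reduceMod p r
  set T := Set.range fun h : H => π ((h : (ZMod (p ^ r))ˣ) : ZMod (p ^ r)) * y
  have hT : ∀ g : H, ∀ x ∈ π ⁻¹' T, g • x ∈ π ⁻¹' T := by
    rintro g x ⟨h, hx⟩
    refine ⟨g * h, show _ = π (((g : (ZMod (p ^ r))ˣ) : ZMod (p ^ r)) * x) from ?_⟩
    rw [map_mul, ← hx]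
    simp only [Subgroup.coe_mul, Units.val_mul, map_mul, mul_assoc]
  have hSA : π ⁻¹' {y} ⊆ π ⁻¹' T := fun x hx => ⟨1, by simpa using hx.symm⟩
  have hmeet : ∀ x ∈ π ⁻¹' T, ∃ s ∈ π ⁻¹' {y}, s ∈ orbit H x := by
    rintro x ⟨h, hx⟩
    refine ⟨h⁻¹ • x, show π (((h⁻¹ : H) : (ZMod (p ^ r))ˣ) * x) = y from ?_, ⟨h⁻¹, rfl⟩⟩
    rw [map_mul, ← hx, ← mul_assoc, ← map_mul, ← Units.val_mul, ← Subgroup.coe_mul,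
      inv_mul_cancel, Subgroup.coe_one, Units.val_one, map_one, one_mul]
  have hunique : ∀ s ∈ π ⁻¹' {y}, ∀ g : H, g • s ∈ π ⁻¹' {y} → g • s = s := by
    intro s hs g hgs
    have hgy : π (((g : (ZMod (p ^ r))ˣ) : ZMod (p ^ r)) * s) = y := hgs
    rw [map_mul, Set.mem_preimage.mp hs] at hgy
    rw [ZMod.subgroup_eq_one_of_map_mul_eq_self hp hdvd hH g π hy hgy, one_smul]
  rw [card_orbitsIn_eq_card_of_transversal hT hSA hmeet hunique, card_preimage_reduceMod hp hr y]

end Reduction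

theorem stmt2_general (p r e : ℕ) (hp : p.Prime) (hr : 1 ≤ r)
    (hdvd : e ∣ p - 1)
    (H : Subgroup (ZMod (p ^ r))ˣ) (hH : Nat.card H = e)
    (y : ZMod (p ^ (r - 1))) :
    Nat.card {O : Set (ZMod (p ^ r)) //
        (∃ x, O = orbR H x) ∧
        (ZMod.castHom (pow_dvd_pow p (Nat.sub_le r 1)) (ZMod (p ^ (r - 1)))) '' O ⊆
          Set.range fun h : H =>
            ZMod.castHom (pow_dvd_pow p (Nat.sub_le r 1)) (ZMod (p ^ (r - 1)))
              ((h : (ZMod (p ^ r))ˣ) : ZMod (p ^ r)) * y} =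
      if y = 0 then 1 + (p - 1) / e else p := by
  rw [Nat.card_congr (Equiv.subtypeEquivRight fun O => by rw [Set.image_subset_iff]; rfl :
    _ ≃ orbitsIn H (reduceMod p r ⁻¹' _))]
  split_ifs with hy
  · subst hy
    simp only [mul_zero, Set.range_const]
    exact card_orbitsIn_preimage_zero hp hr hdvd hH
  · exact card_orbitsIn_preimage_orbit hp hr hdvd hH hy

/-- Let `p` be an odd prime, `r ≥ 1`, `R = ℤ/p^rℤ`, `S = ℤ/p^(r−1)ℤ`,
and `H` the (unique) subgroup of `Rˣ` of order `e`, with `e ∣ p−1`; `H` acts on `R`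
and (via the reduction `π`) on `S`, and `ρ : R/H → S/H` is the induced map on orbit
spaces.  For an orbit `y ∈ S/H` (the orbit of an element `y`), the fiber `ρ⁻¹(orbit
of y)` has `1 + (p−1)/e` elements if `y = 0`, and `p` elements otherwise.  The fiber
is encoded as the set of `H`-orbits `O ⊆ R` with `π '' O` contained in the `H`-orbit
of `y`. -/
theorem stmt2 (p r e : ℕ) (hp : p.Prime) (hodd : Odd p) (hr : 1 ≤ r)
    (he : 0 < e) (hdvd : e ∣ p - 1)
    (H : Subgroup (ZMod (p ^ r))ˣ) (hH : Nat.card H = e)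
    (y : ZMod (p ^ (r - 1))) :
    Nat.card {O : Set (ZMod (p ^ r)) //
        (∃ x, O = orbR H x) ∧
        (ZMod.castHom (pow_dvd_pow p (Nat.sub_le r 1)) (ZMod (p ^ (r - 1)))) '' O ⊆
          Set.range fun h : H =>
            ZMod.castHom (pow_dvd_pow p (Nat.sub_le r 1)) (ZMod (p ^ (r - 1)))
              ((h : (ZMod (p ^ r))ˣ) : ZMod (p ^ r)) * y} =
      if y = 0 then 1 + (p - 1) / e else p :=
  stmt2_general p r e hp hr hdvd H hH y
end

section
/- Let p be an odd prime, r ≥ 1, R = ℤ/p^rℤ, and H the unique subgroup of R^× of order e dividing p−1. If x₀ ∈ R does not lie in p^{r-1}R, then the map (k, h) ↦ k + h·x₀ from (p^{r-1}R) × H to R is injective. -/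
/-!
Two distinct elements `a ≠ b` of `H` differ by a unit of `ℤ/p^rℤ`: the quotient `a b⁻¹` has order
prime to `p`, and a nontrivial element of order prime to `p` is not `≡ 1 (mod p)`. So from
`k₁ + a x₀ = k₂ + b x₀` with `kᵢ ∈ p^(r-1)R` we would get `x₀ = (a - b)⁻¹ (k₂ - k₁) ∈ p^(r-1)R`.
-/

open Function

theorem Function.Injective.add_mul_of_isUnit_sub {R ι : Type*} [CommRing R] (I : Ideal R)
    (f : ι → R) (hf : ∀ i j, i ≠ j → IsUnit (f i - f j)) {x : R} (hx : x ∉ I) :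
    Injective (fun ki : I × ι => (ki.1 : R) + f ki.2 * x) := by
  rintro ⟨k₁, i₁⟩ ⟨k₂, i₂⟩ heq
  simp only at heq
  have hi : i₁ = i₂ := by
    by_contra hne
    obtain ⟨u, hu⟩ := hf i₁ i₂ hne
    have hmem : (u : R) * x ∈ I := by
      rw [hu, show (f i₁ - f i₂) * x = k₂ - k₁ by linear_combination heq]
      exact I.sub_mem k₂.2 k₁.2
    exact hx (by simpa using I.mul_mem_left (↑u⁻¹ : R) hmem)
  subst hi
  exact Prod.ext (Subtype.ext (add_right_cancel heq)) rfl

theorem ZMod.isUnit_coe_sub_coe_of_coprime_card {p k : ℕ} [Fact p.Prime]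
    (H : Subgroup (ZMod (p ^ k))ˣ) (hH : (Nat.card H).Coprime p) {a b : H} (hab : a ≠ b) :
    IsUnit (((a : (ZMod (p ^ k))ˣ) : ZMod (p ^ k)) - ((b : (ZMod (p ^ k))ˣ) : ZMod (p ^ k))) := by
  set u : (ZMod (p ^ k))ˣ := ↑(a * b⁻¹)
  have hu : (orderOf (u : ZMod (p ^ k))).Coprime (p ^ k) := by
    rw [orderOf_units, Subgroup.orderOf_coe]
    exact (hH.coprime_dvd_left (orderOf_dvd_natCard _)).pow_right k
  have hsub : ((a : (ZMod (p ^ k))ˣ) : ZMod (p ^ k)) - ((b : (ZMod (p ^ k))ˣ) : ZMod (p ^ k)) =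
      ((u : ZMod (p ^ k)) - 1) * ((b : (ZMod (p ^ k))ˣ) : ZMod (p ^ k)) := by
    simp [u, sub_mul]
  rcases ZMod.eq_one_or_isUnit_sub_one rfl _ hu with hu1 | hu1
  · exact absurd (by simpa [u, mul_inv_eq_one] using Units.val_eq_one.mp hu1) hab
  · rw [hsub]
    exact hu1.mul (Units.isUnit _)

theorem stmt3_general (p r e : ℕ) (hp : p.Prime) (hdvd : e ∣ p - 1)
    (H : Subgroup (ZMod (p ^ r))ˣ) (hH : Nat.card H = e)
    (x₀ : ZMod (p ^ r))
    (hx₀ : x₀ ∉ Ideal.span {(p : ZMod (p ^ r)) ^ (r - 1)}) :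
    Function.Injective
      (fun kh : (Ideal.span {(p : ZMod (p ^ r)) ^ (r - 1)} : Ideal (ZMod (p ^ r))) × H =>
        (kh.1 : ZMod (p ^ r)) + ((kh.2 : (ZMod (p ^ r))ˣ) : ZMod (p ^ r)) * x₀) := by
  have := Fact.mk hp
  have hpred : (p - 1).Coprime p := (Nat.coprime_self_sub_left hp.one_lt.le).mpr (p.coprime_one_left)
  have hcop : (Nat.card H).Coprime p := hH ▸ hpred.coprime_dvd_left hdvd
  exact Injective.add_mul_of_isUnit_sub _ (fun h : H => ((h : (ZMod (p ^ r))ˣ) : ZMod (p ^ r)))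
    (fun _ _ => ZMod.isUnit_coe_sub_coe_of_coprime_card H hcop) hx₀

/-- Let `p` be an odd prime, `r ≥ 1`, `R = ℤ/p^rℤ`, and `H` the
(unique) subgroup of `Rˣ` of order `e ∣ p−1`.  If `x₀ ∈ R` does not lie in
`p^(r−1)R`, then `(k, h) ↦ k + h·x₀` from `(p^(r−1)R) × H` to `R` is injective. -/
theorem stmt3 (p r e : ℕ) (hp : p.Prime) (hodd : Odd p) (hr : 1 ≤ r)
    (he : 0 < e) (hdvd : e ∣ p - 1)
    (H : Subgroup (ZMod (p ^ r))ˣ) (hH : Nat.card H = e)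
    (x₀ : ZMod (p ^ r))
    (hx₀ : x₀ ∉ Ideal.span {(p : ZMod (p ^ r)) ^ (r - 1)}) :
    Function.Injective
      (fun kh : (Ideal.span {(p : ZMod (p ^ r)) ^ (r - 1)} : Ideal (ZMod (p ^ r))) × H =>
        (kh.1 : ZMod (p ^ r)) + ((kh.2 : (ZMod (p ^ r))ˣ) : ZMod (p ^ r)) * x₀) :=
  stmt3_general p r e hp hdvd H hH x₀ hx₀
end

section
/- Let p be an odd prime, r ≥ 1, R = ℤ/p^rℤ, H the unique subgroup of R^× of order e | p−1, ζ a primitive p^r-th root of unity, and K the fixed field of H acting on ℚ(ζ) (so [ℚ(ζ):K] = e). For a nonzero orbit x = Hx₀, define the Gaussian period f_x = Σ_{h ∈ H} ζ^{h x₀}. Then for a nonzero orbit x with ord_p(x) < r−1 (i.e. its reduction mod p^{r-1} is a nonzero orbit), Tr_{K/ℚ}(f_x · conj(f_x)) = p^r − p^{r-1}. -/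
/-- The Gaussian period `f_{Hx} = Σ_{h ∈ H} ζ^(h·x)` attached to the orbit of `x`
under a subgroup `H` of `(ℤ/mℤ)ˣ`. -/
noncomputable def gaussPeriod {m : ℕ} (ζ : ℂ) (H : Subgroup (ZMod m)ˣ) (x : ZMod m) : ℂ :=
  ∑ᶠ h : H, ζ ^ (((h : (ZMod m)ˣ) : ZMod m) * x).val

/-- `K` is the fixed field of `H` acting on `ℚ(ζ)` by `σ_h(ζ) = ζ^h`: an element
`z ∈ ℂ` lies in `K` iff `z ∈ ℚ(ζ)` and `z` is fixed by every `ℚ`-automorphism `σ`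
of `ℚ(ζ)` sending `ζ` to `ζ^h` for some `h ∈ H`. -/
def IsHFixedField {m : ℕ} (ζ : ℂ) (H : Subgroup (ZMod m)ˣ)
    (K : IntermediateField ℚ ℂ) : Prop :=
  ∀ z : ℂ, z ∈ K ↔ ∃ hz : z ∈ IntermediateField.adjoin ℚ ({ζ} : Set ℂ),
    ∀ σ : (IntermediateField.adjoin ℚ ({ζ} : Set ℂ)) ≃ₐ[ℚ]
        (IntermediateField.adjoin ℚ ({ζ} : Set ℂ)),
      (∃ h : H, (σ ⟨ζ, IntermediateField.subset_adjoin ℚ {ζ} rfl⟩ : ℂ) =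
          ζ ^ (((h : (ZMod m)ˣ) : ZMod m)).val) →
      (σ ⟨z, hz⟩ : ℂ) = z

/-!
Expanding, `f_x · conj f_x = ∑_{h,h' ∈ H} ζ^((h - h') x₀)`. As `[ℚ(ζ) : K] = |H|`, `|H|` times the
trace over `K` is the trace over `ℚ(ζ)`, and the latter sends `ζ^a` to the Ramanujan sum
`∑_{t ∈ (ℤ/p^r)ˣ} ζ^(t a)`. The diagonal terms contribute `|H| φ(p^r)`. Off the diagonal, `h - h'`
is a unit, because `H` has order prime to `p` and so meets `1 + pℤ/p^rℤ` trivially; hence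
`p (h - h') x₀ ≠ 0`, and the substitution `t ↦ t + p` multiplies the Ramanujan sum by
`ζ^(p (h - h') x₀) ≠ 1`, so it vanishes.
-/

theorem AddChar.sum_units_mul_eq_zero {R R' : Type*} [CommRing R] [Fintype R] [DecidableEq R]
    [CommRing R'] [IsDomain R'] (ψ : AddChar R R') {b c : R} (hc : IsNilpotent c)
    (hψ : ψ (c * b) ≠ 1) : ∑ u : Rˣ, ψ (u * b) = 0 := by
  have unit_add (u : Rˣ) {d : R} (hd : IsNilpotent d) : IsUnit ((u : R) + d) :=
    hd.isUnit_add_left_of_commute u.isUnit (Commute.all _ _)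
  have hshift : ∑ u : Rˣ, ψ (u * b) = ψ (c * b) * ∑ u : Rˣ, ψ (u * b) := by
    rw [Finset.mul_sum]
    refine Finset.sum_nbij' (fun u ↦ (unit_add u hc.neg).unit) (fun u ↦ (unit_add u hc).unit)
      (by simp) (by simp) (fun u _ ↦ by ext; simp) (fun u _ ↦ by ext; simp) (fun u _ ↦ ?_)
    rw [← AddChar.map_add_eq_mul, IsUnit.unit_spec]
    ring_nf
  rw [eq_comm, ← sub_eq_zero, ← sub_one_mul, mul_eq_zero] at hshift
  exact hshift.resolve_left (sub_ne_zero.mpr hψ)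

theorem eq_one_of_pow_eq_one_of_natCast_dvd_sub_one {R : Type*} [CommRing R] {p k m : ℕ}
    (hp : (p : R) ^ (k + 1) = 0) (hm : m.Coprime p) {g : R} (hgm : g ^ m = 1)
    (hg : (p : R) ∣ g - 1) : g = 1 := by
  have hgp : g ^ p ^ k = 1 := by
    simpa [hp, sub_eq_zero] using dvd_sub_pow_of_dvd_sub hg k
  simpa [Nat.Coprime.pow_right k hm] using pow_gcd_eq_one.mpr ⟨hgm, hgp⟩

namespace ZMod

theorem natCast_dvd_of_not_isUnit {p r : ℕ} (hp : p.Prime) {x : ZMod (p ^ r)}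
    (hx : ¬IsUnit x) : (p : ZMod (p ^ r)) ∣ x := by
  have : NeZero (p ^ r) := ⟨pow_ne_zero r hp.ne_zero⟩
  rw [← natCast_zmod_val x, isUnit_iff_coprime] at *
  refine Nat.cast_dvd_cast (by_contra fun hpx ↦ hx ?_)
  exact (hp.coprime_iff_not_dvd.mpr hpx).symm.pow_right r

theorem natCast_mul_ne_zero_of_castHom_ne_zero {p r : ℕ} (hp : 0 < p) {x : ZMod (p ^ r)}
    (hx : castHom (pow_dvd_pow p (Nat.sub_le r 1)) (ZMod (p ^ (r - 1))) x ≠ 0) :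
    (p : ZMod (p ^ r)) * x ≠ 0 := by
  have : NeZero (p ^ r) := ⟨pow_ne_zero r hp.ne'⟩
  contrapose! hx
  rw [← natCast_zmod_val x, ← Nat.cast_mul, natCast_eq_zero_iff] at hx
  rw [← natCast_zmod_val x, map_natCast, natCast_eq_zero_iff]
  cases r with
  | zero => exact one_dvd _
  | succ k => exact Nat.dvd_of_mul_dvd_mul_left hp (by simpa [pow_succ'] using hx)

theorem isUnit_sub_of_mem_of_coprime {p r : ℕ} (hp : p.Prime) {H : Subgroup (ZMod (p ^ r))ˣ}
    (hH : (Nat.card H).Coprime p) {h h' : (ZMod (p ^ r))ˣ} (hh : h ∈ H) (hh' : h' ∈ H)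
    (hne : h ≠ h') : IsUnit ((h : ZMod (p ^ r)) - h') := by
  set g := h'⁻¹ * h with hg
  have hsub : (h : ZMod (p ^ r)) - h' = h' * ((g : ZMod (p ^ r)) - 1) := by
    simp [hg, mul_sub]
  rw [hsub, Units.isUnit_units_mul]
  by_contra hu
  have hgm : (g : ZMod (p ^ r)) ^ Nat.card H = 1 := by
    have := congrArg (fun x : H ↦ ((x : (ZMod (p ^ r))ˣ) : ZMod (p ^ r)))
      (pow_card_eq_one' (x := (⟨g, H.mul_mem (H.inv_mem hh') hh⟩ : H)))
    simpa only [Subgroup.coe_pow, Units.val_pow_eq_pow_val, OneMemClass.coe_one, Units.val_one]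
      using this
  have hpr : (p : ZMod (p ^ r)) ^ (r + 1) = 0 := by
    rw [pow_succ, ← Nat.cast_pow, natCast_self, zero_mul]
  have := eq_one_of_pow_eq_one_of_natCast_dvd_sub_one hpr hH hgm
    (natCast_dvd_of_not_isUnit hp hu)
  exact hne (inv_mul_eq_one.mp (Units.ext this)).symm

theorem sum_units_mul_sub_mul_eq_ite {p r : ℕ} [NeZero (p ^ r)] (hp : p.Prime)
    {R : Type*} [CommRing R] [IsDomain R] {ψ : AddChar (ZMod (p ^ r)) R} (hψ : ψ.IsPrimitive) {H : Subgroup (ZMod (p ^ r))ˣ}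
    (hH : (Nat.card H).Coprime p) {x : ZMod (p ^ r)} (hx : (p : ZMod (p ^ r)) * x ≠ 0)
    [DecidableEq H] (h h' : H) :
    ∑ t : (ZMod (p ^ r))ˣ, ψ (t * ((((h : (ZMod (p ^ r))ˣ) : ZMod (p ^ r)) -
      ((h' : (ZMod (p ^ r))ˣ) : ZMod (p ^ r))) * x)) =
      if h = h' then ((p ^ r).totient : R) else 0 := by
  split_ifs with hhh
  · simp [hhh, card_units_eq_totient]
  refine AddChar.sum_units_mul_eq_zero ψ (c := p) ⟨r, by rw [← Nat.cast_pow, natCast_self]⟩ ?_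
  have hunit := isUnit_sub_of_mem_of_coprime hp hH h.2 h'.2 (Subtype.coe_injective.ne hhh)
  rwa [Ne, hψ.zmod_char_eq_one_iff, mul_left_comm, hunit.mul_right_eq_zero]

end ZMod

theorem Nat.cast_totient_prime_pow {R : Type*} [CommRing R] {p r : ℕ} (hp : p.Prime)
    (hr : 1 ≤ r) : ((p ^ r).totient : R) = (p : R) ^ r - (p : R) ^ (r - 1) := by
  obtain ⟨k, rfl⟩ := Nat.exists_eq_add_of_le' hr
  rw [Nat.totient_prime_pow_succ hp, Nat.cast_mul, Nat.cast_sub hp.one_le]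
  simp only [Nat.cast_pow, Nat.cast_one, Nat.add_sub_cancel]
  ring

theorem gaussPeriod_mul_conj {n : ℕ} [NeZero n] {ζ : ℂ} (hζ : ζ ^ n = 1)
    (H : Subgroup (ZMod n)ˣ) [Fintype H] (x : ZMod n) :
    gaussPeriod ζ H x * starRingEnd ℂ (gaussPeriod ζ H x) =
      ∑ h : H, ∑ h' : H,
        ζ ^ ((((h : (ZMod n)ˣ) : ZMod n) - ((h' : (ZMod n)ˣ) : ZMod n)) * x).val := by
  let ψ := AddChar.zmodChar n hζ
  have hf : gaussPeriod ζ H x = ∑ h : H, ψ (((h : (ZMod n)ˣ) : ZMod n) * x) :=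
    finsum_eq_sum_of_fintype _
  simp_rw [hf, map_sum, ← AddChar.map_neg_eq_conj, Finset.sum_mul_sum, ← AddChar.map_add_eq_mul]
  refine Finset.sum_congr rfl fun h _ ↦ Finset.sum_congr rfl fun h' _ ↦ ?_
  rw [sub_mul, sub_eq_add_neg]
  rfl

open IntermediateField

namespace IsPrimitiveRoot

variable {n : ℕ} {ζ : ℂ}

theorem adjoinSimple_gen (hζ : IsPrimitiveRoot ζ n) :
    IsPrimitiveRoot (AdjoinSimple.gen ℚ ζ) n :=
  coe_submonoidClass_iff.mp hζ

variable [NeZero n]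

theorem isCyclotomicExtension_adjoin (hζ : IsPrimitiveRoot ζ n) :
    IsCyclotomicExtension {n} ℚ ℚ⟮ζ⟯ := by
  change IsCyclotomicExtension {n} ℚ ℚ⟮ζ⟯.toSubalgebra
  rw [adjoin_simple_toSubalgebra_of_isAlgebraic
    ((hζ.isIntegral (NeZero.pos n)).tower_top (A := ℚ)).isAlgebraic]
  exact hζ.adjoin_isCyclotomicExtension ℚ

theorem finiteDimensional_adjoin (hζ : IsPrimitiveRoot ζ n) : FiniteDimensional ℚ ℚ⟮ζ⟯ :=
  have := hζ.isCyclotomicExtension_adjoin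
  IsCyclotomicExtension.finiteDimensional {n} ℚ ℚ⟮ζ⟯

theorem isGalois_adjoin (hζ : IsPrimitiveRoot ζ n) : IsGalois ℚ ℚ⟮ζ⟯ :=
  have := hζ.isCyclotomicExtension_adjoin
  IsCyclotomicExtension.isGalois {n} ℚ ℚ⟮ζ⟯

theorem autToPow_adjoin_bijective (hζ : IsPrimitiveRoot ζ n) :
    Function.Bijective (hζ.adjoinSimple_gen.autToPow ℚ) := by
  have := hζ.isCyclotomicExtension_adjoin
  have := hζ.finiteDimensional_adjoin
  have := hζ.isGalois_adjoin
  refine (Fintype.bijective_iff_injective_and_card _).mpr ⟨autToPow_injective _ _, ?_⟩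
  rw [← Nat.card_eq_fintype_card, IsGalois.card_aut_eq_finrank, ZMod.card_units_eq_totient,
    IsCyclotomicExtension.finrank ℚ⟮ζ⟯ (Polynomial.cyclotomic.irreducible_rat (NeZero.pos n))]

noncomputable def galAdjoinEquiv (hζ : IsPrimitiveRoot ζ n) : Gal(ℚ⟮ζ⟯/ℚ) ≃* (ZMod n)ˣ :=
  MulEquiv.ofBijective _ hζ.autToPow_adjoin_bijective

theorem galAdjoinEquiv_apply_gen (hζ : IsPrimitiveRoot ζ n) (σ : Gal(ℚ⟮ζ⟯/ℚ)) :
    (σ (AdjoinSimple.gen ℚ ζ) : ℂ) = ζ ^ (hζ.galAdjoinEquiv σ : ZMod n).val := by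
  rw [← hζ.adjoinSimple_gen.autToPow_spec ℚ σ]
  rfl

theorem algebraMap_trace_adjoin_gen_pow (hζ : IsPrimitiveRoot ζ n) (a : ZMod n) :
    algebraMap ℚ ℂ (Algebra.trace ℚ ℚ⟮ζ⟯ (AdjoinSimple.gen ℚ ζ ^ a.val)) =
      ∑ t : (ZMod n)ˣ, ζ ^ (t * a : ZMod n).val := by
  have := hζ.finiteDimensional_adjoin
  have := hζ.isGalois_adjoin
  rw [IsScalarTower.algebraMap_apply ℚ ℚ⟮ζ⟯ ℂ, trace_eq_sum_automorphisms, map_sum,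
    ← hζ.galAdjoinEquiv.toEquiv.sum_comp]
  refine Finset.sum_congr rfl fun σ _ ↦ ?_
  rw [map_pow, map_pow, IntermediateField.algebraMap_apply, galAdjoinEquiv_apply_gen hζ,
    ← pow_mul, ZMod.val_mul, ← pow_eq_pow_mod _ hζ.pow_eq_one]
  rfl

theorem mem_comap_galAdjoinEquiv_iff (hζ : IsPrimitiveRoot ζ n) {H : Subgroup (ZMod n)ˣ}
    (σ : Gal(ℚ⟮ζ⟯/ℚ)) :
    σ ∈ H.comap hζ.galAdjoinEquiv.toMonoidHom ↔
      ∃ h : H, (σ (AdjoinSimple.gen ℚ ζ) : ℂ) = ζ ^ ((h : (ZMod n)ˣ) : ZMod n).val := by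
  rw [galAdjoinEquiv_apply_gen hζ]
  refine ⟨fun hσ ↦ ⟨⟨_, hσ⟩, rfl⟩, fun ⟨h, hσ⟩ ↦ ?_⟩
  have : hζ.galAdjoinEquiv σ = h :=
    Units.ext (ZMod.val_injective _ (hζ.pow_inj (ZMod.val_lt _) (ZMod.val_lt _) hσ))
  simp [Subgroup.mem_comap, this]

end IsPrimitiveRoot

namespace IsHFixedField

variable {n : ℕ} [NeZero n] {ζ : ℂ} {H : Subgroup (ZMod n)ˣ} {K : IntermediateField ℚ ℂ}

theorem eq_map_fixedField (hζ : IsPrimitiveRoot ζ n) (hK : IsHFixedField ζ H K) :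
    K = (fixedField (H.comap hζ.galAdjoinEquiv.toMonoidHom)).map ℚ⟮ζ⟯.val := by
  ext z
  rw [hK z]
  constructor
  · rintro ⟨hz, hfix⟩
    refine ⟨⟨z, hz⟩, (mem_fixedField_iff _ _).mpr fun σ hσ ↦ Subtype.ext ?_, rfl⟩
    exact hfix σ ((hζ.mem_comap_galAdjoinEquiv_iff σ).mp hσ)
  · rintro ⟨y, hy, rfl⟩
    refine ⟨y.2, fun σ hσ ↦ congrArg Subtype.val ?_⟩
    exact (mem_fixedField_iff _ _).mp hy σ ((hζ.mem_comap_galAdjoinEquiv_iff σ).mpr hσ)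

theorem card_smul_trace (hK : IsHFixedField ζ H K) (hζ : IsPrimitiveRoot ζ n) {w : K}
    {z : ℚ⟮ζ⟯} (hwz : (w : ℂ) = z) :
    Nat.card H • Algebra.trace ℚ K w = Algebra.trace ℚ ℚ⟮ζ⟯ z := by
  have := hζ.finiteDimensional_adjoin
  set H' := H.comap hζ.galAdjoinEquiv.toMonoidHom
  let E : fixedField H' ≃ₐ[ℚ] K :=
    (equivMap _ ℚ⟮ζ⟯.val).trans (equivOfEq (eq_map_fixedField hζ hK).symm)
  obtain ⟨y, rfl⟩ := E.surjective w
  have hy : algebraMap (fixedField H') ℚ⟮ζ⟯ y = z := Subtype.ext hwz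
  have hrank : Module.finrank (fixedField H') ℚ⟮ζ⟯ = Nat.card H := by
    rw [finrank_fixedField_eq_card]
    exact Nat.card_congr (hζ.galAdjoinEquiv.toEquiv.subtypeEquiv fun _ ↦ Iff.rfl)
  rw [Algebra.trace_eq_of_algEquiv, ← hy,
    ← Algebra.trace_trace (S := fixedField H') (T := ℚ⟮ζ⟯), Algebra.trace_algebraMap, hrank,
    map_nsmul]

end IsHFixedField

theorem stmt4_general (p r e : ℕ) (hp : p.Prime) (hr : 1 ≤ r)
    (hdvd : e ∣ p - 1)
    (ζ : ℂ) (hζ : IsPrimitiveRoot ζ (p ^ r))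
    (H : Subgroup (ZMod (p ^ r))ˣ) (hH : Nat.card H = e)
    (K : IntermediateField ℚ ℂ) (hK : IsHFixedField ζ H K)
    (x₀ : ZMod (p ^ r))
    (hx₀ : ZMod.castHom (pow_dvd_pow p (Nat.sub_le r 1)) (ZMod (p ^ (r - 1))) x₀ ≠ 0)
    (w : K)
    (hw : (w : ℂ) = gaussPeriod ζ H x₀ * (starRingEnd ℂ) (gaussPeriod ζ H x₀)) :
    Algebra.trace ℚ K w = (p : ℚ) ^ r - (p : ℚ) ^ (r - 1) := by
  classical
  have : NeZero (p ^ r) := ⟨pow_ne_zero r hp.ne_zero⟩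
  have := Fintype.ofFinite H
  have hcop : (Nat.card H).Coprime p := by
    have : (p - 1).Coprime p := (Nat.coprime_self_sub_left hp.one_le).mpr (Nat.coprime_one_left p)
    exact hH ▸ this.coprime_dvd_left hdvd
  let z : ℚ⟮ζ⟯ := ∑ h : H, ∑ h' : H, AdjoinSimple.gen ℚ ζ ^
    ((((h : (ZMod (p ^ r))ˣ) : ZMod (p ^ r)) - ((h' : (ZMod (p ^ r))ˣ) : ZMod (p ^ r))) * x₀).val
  have hz : (w : ℂ) = z := by
    rw [hw, gaussPeriod_mul_conj hζ.pow_eq_one]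
    simp [z]
  have hψ := AddChar.zmodChar_primitive_of_primitive_root _ hζ
  have htrace : algebraMap ℚ ℂ (Algebra.trace ℚ ℚ⟮ζ⟯ z) = e * ((p ^ r).totient : ℂ) := by
    simp only [z, map_sum, hζ.algebraMap_trace_adjoin_gen_pow,
      ← AddChar.zmodChar_apply hζ.pow_eq_one,
      ZMod.sum_units_mul_sub_mul_eq_ite hp hψ hcop
        (ZMod.natCast_mul_ne_zero_of_castHom_ne_zero hp.pos hx₀),
      Finset.sum_ite_eq, Finset.mem_univ, if_true, Finset.sum_const, Finset.card_univ,
      ← Nat.card_eq_fintype_card, hH, nsmul_eq_mul]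
  rw [← hK.card_smul_trace hζ hz, hH, nsmul_eq_mul, map_mul, map_natCast,
    Nat.cast_totient_prime_pow hp hr] at htrace
  have he : (e : ℂ) ≠ 0 := Nat.cast_ne_zero.mpr (hH ▸ Nat.card_pos.ne')
  apply (algebraMap ℚ ℂ).injective
  simpa using mul_left_cancel₀ he htrace

/-- with `K = ℚ(ζ)^H` of index `e = |H|` in `ℚ(ζ_{p^r})`, and
`f_x = Σ_{h∈H} ζ^(h x₀)` the Gaussian period of a nonzero orbit `x = Hx₀` with
`ord_p(x) < r−1` (i.e. the reduction of `x₀` mod `p^(r−1)` is nonzero),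
`Tr_{K/ℚ}(f_x · conj(f_x)) = p^r − p^(r−1)`. -/
theorem stmt4 (p r e : ℕ) (hp : p.Prime) (hodd : Odd p) (hr : 1 ≤ r)
    (he : 0 < e) (hdvd : e ∣ p - 1)
    (ζ : ℂ) (hζ : IsPrimitiveRoot ζ (p ^ r))
    (H : Subgroup (ZMod (p ^ r))ˣ) (hH : Nat.card H = e)
    (K : IntermediateField ℚ ℂ) (hK : IsHFixedField ζ H K)
    (x₀ : ZMod (p ^ r)) (hx₀ne : x₀ ≠ 0)
    (hx₀ : ZMod.castHom (pow_dvd_pow p (Nat.sub_le r 1)) (ZMod (p ^ (r - 1))) x₀ ≠ 0)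
    (w : K)
    (hw : (w : ℂ) = gaussPeriod ζ H x₀ * (starRingEnd ℂ) (gaussPeriod ζ H x₀)) :
    Algebra.trace ℚ K w = (p : ℚ) ^ r - (p : ℚ) ^ (r - 1) :=
  stmt4_general p r e hp hr hdvd ζ hζ H hH K hK x₀ hx₀ w hw
end

section
/- Define h(x,y) = ((y² + y + 1 − x²)/(3y²)) · y^{x/(y−1)} for real x ≥ 2 and y ≥ 2x+1. Then for all real x ≥ 2 and y ≥ 2x², we have h(x,y) < 1. -/
/-- With `h(x,y) = ((y²+y+1−x²)/(3y²)) · y^(x/(y−1))`, for all real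
`x ≥ 2` and `y ≥ 2x²` we have `h(x,y) < 1`. -/
theorem stmt13 (x y : ℝ) (hx : 2 ≤ x) (hy : 2 * x ^ 2 ≤ y) :
    (y ^ 2 + y + 1 - x ^ 2) / (3 * y ^ 2) * y ^ (x / (y - 1)) < 1 := by
  have hx4 : (4:ℝ) ≤ x ^ 2 := by nlinarith
  have hy8 : (8:ℝ) ≤ y := by nlinarith
  have hy0 : (0:ℝ) < y := by linarith
  have hy1 : (0:ℝ) < y - 1 := by linarith
  have hs2 : Real.sqrt 2 ^ 2 = 2 := Real.sq_sqrt (by norm_num)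
  have hs2pos : (0:ℝ) < Real.sqrt 2 := Real.sqrt_pos.mpr (by norm_num)
  have hsy : Real.sqrt y ^ 2 = y := Real.sq_sqrt hy0.le
  have hsypos : (0:ℝ) < Real.sqrt y := Real.sqrt_pos.mpr hy0
  have he : (2.7182818283:ℝ) < Real.exp 1 := Real.exp_one_gt_d9
  have he2 : Real.exp 1 < 2.7182818286 := Real.exp_one_lt_d9
  -- AM-GM: x * sqrt 2 * sqrt y ≤ y
  have hamgm : x * Real.sqrt 2 * Real.sqrt y ≤ y := by
    nlinarith [sq_nonneg (x * Real.sqrt 2 - Real.sqrt y)]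
  -- log y ≤ 2 * sqrt y / e
  have hlog : Real.log y ≤ 2 * Real.sqrt y / Real.exp 1 := by
    have h1 : Real.log (Real.sqrt y / Real.exp 1) ≤ Real.sqrt y / Real.exp 1 - 1 :=
      Real.log_le_sub_one_of_pos (by positivity)
    rw [Real.log_div hsypos.ne' (Real.exp_ne_zero 1), Real.log_exp,
      Real.log_sqrt hy0.le] at h1
    have hexp1 : (0:ℝ) < Real.exp 1 := Real.exp_pos 1
    calc Real.log y = 2 * (Real.log y / 2) := by ring
      _ ≤ 2 * (Real.sqrt y / Real.exp 1) := by linarith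
      _ = 2 * Real.sqrt y / Real.exp 1 := by ring
  -- exponent ≤ 1
  have hexpo : x / (y - 1) * Real.log y ≤ 1 := by
    rw [div_mul_eq_mul_div, div_le_one hy1]
    have hlogpos : 0 ≤ Real.log y := Real.log_nonneg (by linarith)
    have h2 : x * Real.log y ≤ x * (2 * Real.sqrt y / Real.exp 1) :=
      mul_le_mul_of_nonneg_left hlog (by linarith)
    have h3 : x * (2 * Real.sqrt y / Real.exp 1) ≤ y - 1 := by
      rw [mul_div_assoc', div_le_iff₀ (Real.exp_pos 1)]
      -- x * (2 * sqrt y) ≤ (y-1) * e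
      have h4 : x * (2 * Real.sqrt y) * Real.sqrt 2 ≤ 2 * y := by nlinarith
      have h5 : (1:ℝ) < Real.sqrt 2 := by nlinarith
      have h6 : Real.sqrt 2 < 1.42 := by nlinarith
      have h7 : x * (2 * Real.sqrt y) ≤ Real.sqrt 2 * y := by nlinarith
      nlinarith
    linarith
  -- rpow bound
  have hP : y ^ (x / (y - 1)) ≤ Real.exp 1 := by
    rw [Real.rpow_def_of_pos hy0, mul_comm]
    exact Real.exp_le_exp.mpr hexpo
  have hPpos : (0:ℝ) < y ^ (x / (y - 1)) := Real.rpow_pos_of_pos hy0 _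
  -- coefficient bound
  have hC : (y ^ 2 + y + 1 - x ^ 2) / (3 * y ^ 2) ≤ 23 / 64 := by
    rw [div_le_div_iff₀ (by positivity) (by norm_num)]
    nlinarith [mul_nonneg (sub_nonneg.mpr hy8) (by linarith : (0:ℝ) ≤ 5 * y - 24)]
  rcases le_or_gt ((y ^ 2 + y + 1 - x ^ 2) / (3 * y ^ 2)) 0 with hC0 | hC0
  · calc (y ^ 2 + y + 1 - x ^ 2) / (3 * y ^ 2) * y ^ (x / (y - 1)) ≤ 0 :=
          mul_nonpos_of_nonpos_of_nonneg hC0 hPpos.le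
      _ < 1 := by norm_num
  · calc (y ^ 2 + y + 1 - x ^ 2) / (3 * y ^ 2) * y ^ (x / (y - 1))
        ≤ 23 / 64 * Real.exp 1 := by
          apply mul_le_mul hC hP hPpos.le (by norm_num)
      _ < 1 := by nlinarith
end

section
/- Let p be an odd prime, r ≥ 1, e | p−1, and let K be the degree-n subfield of ℚ(ζ_{p^r}) with n = p^{r-1}(p−1)/e. Set C = sqrt((p^{r+1}+p^r+1−e²)/(12 p^{r+1})), υ = rn − (p^{r-1}−1)/e − 1, δ = (p^{r-1}−1)/(p^{r-1}(p−1)), and ω = C·p^{(δ + 1/n)/2}. If r ≥ 2, then ω ≤ 3^{−2/3}. -/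
/-!
Both factors of `ω` are bounded separately: `C ≤ 1/3` because `p ≥ 3` and `e ≥ 1`, and
`δ + 1/n ≤ 2/p` because `e ≤ p - 1` and `p^(r-1) ≥ p`. Hence `ω ≤ (1/3) · p^(1/p)`, and
`p^(1/p) ≤ 3^(1/3)` for `p ≥ 3`.
-/

open Real

theorem rpow_one_div_self_le_of_three_le {x : ℝ} (hx : 3 ≤ x) :
    x ^ (1 / x) ≤ 3 ^ (1 / 3 : ℝ) := by
  have h3 : exp 1 ≤ 3 := exp_one_lt_three.le
  have hlog : log x / x ≤ log 3 / 3 := log_div_self_antitoneOn h3 (h3.trans hx) hx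
  rw [rpow_def_of_pos (by linarith), rpow_def_of_pos (by norm_num), mul_one_div, mul_one_div]
  exact exp_le_exp.mpr hlog

theorem sqrt_pow_ratio_le_one_third {p e : ℝ} (r : ℕ) (hp : 3 ≤ p) (he : 1 ≤ e) :
    √((p ^ (r + 1) + p ^ r + 1 - e ^ 2) / (12 * p ^ (r + 1))) ≤ 1 / 3 := by
  have hpr : 0 < p ^ r := by positivity
  have hratio : (p ^ (r + 1) + p ^ r + 1 - e ^ 2) / (12 * p ^ (r + 1)) ≤ (1 / 3) ^ 2 := by
    rw [div_le_iff₀ (by positivity), pow_succ]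
    nlinarith
  simpa using sqrt_le_sqrt hratio

theorem div_add_one_div_le_two_div {p A e : ℝ} (hp : 2 ≤ p) (hA : p ≤ A) (he : e ≤ p - 1) :
    (A - 1) / (A * (p - 1)) + 1 / (A * (p - 1) / e) ≤ 2 / p := by
  rw [one_div_div, ← add_div, div_le_div_iff₀ (by nlinarith) (by linarith)]
  nlinarith [mul_le_mul_of_nonneg_right hA (by linarith : 0 ≤ p - 2)]

/-- Let `p` be an odd prime, `r ≥ 2`, `e ∣ p−1`,
`n = p^(r−1)(p−1)/e`, `C = √((p^(r+1)+p^r+1−e²)/(12 p^(r+1)))`,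
`δ = (p^(r−1)−1)/(p^(r−1)(p−1))` and `ω = C · (√p)^(δ+1/n) = C · p^((δ+1/n)/2)`.
Then `ω ≤ 3^(−2/3)`. -/
theorem stmt17 (p r e : ℕ) (hp : p.Prime) (hodd : Odd p) (hr : 2 ≤ r)
    (he : 0 < e) (hdvd : e ∣ p - 1)
    (n C δ ω : ℝ)
    (hn : n = (p : ℝ) ^ (r - 1) * ((p : ℝ) - 1) / e)
    (hC : C = Real.sqrt (((p : ℝ) ^ (r + 1) + (p : ℝ) ^ r + 1 - (e : ℝ) ^ 2) /
        (12 * (p : ℝ) ^ (r + 1))))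
    (hδ : δ = ((p : ℝ) ^ (r - 1) - 1) / ((p : ℝ) ^ (r - 1) * ((p : ℝ) - 1)))
    (hω : ω = C * (p : ℝ) ^ ((δ + 1 / n) / 2)) :
    ω ≤ (3 : ℝ) ^ (-(2 / 3) : ℝ) := by
  have hp3 : (3 : ℝ) ≤ p := by
    have := hp.two_le
    obtain ⟨k, rfl⟩ := hodd
    norm_cast
    omega
  have hep : (e : ℝ) ≤ p - 1 := by
    rw [← Nat.cast_pred hp.pos]
    exact_mod_cast Nat.le_of_dvd (Nat.sub_pos_of_lt hp.one_lt) hdvd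
  have hpA : (p : ℝ) ≤ p ^ (r - 1) := le_self_pow₀ (by linarith) (by omega)
  have hexp : δ + 1 / n ≤ 2 / p :=
    hδ ▸ hn ▸ div_add_one_div_le_two_div (by linarith) hpA hep
  have hpow : (p : ℝ) ^ ((δ + 1 / n) / 2) ≤ 3 ^ (1 / 3 : ℝ) :=
    calc (p : ℝ) ^ ((δ + 1 / n) / 2) ≤ (p : ℝ) ^ (1 / (p : ℝ)) :=
          rpow_le_rpow_of_exponent_le (by linarith)
            (by linarith [show 2 / (p : ℝ) = 2 * (1 / p) by ring])
      _ ≤ 3 ^ (1 / 3 : ℝ) := rpow_one_div_self_le_of_three_le hp3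
  calc ω ≤ 1 / 3 * 3 ^ (1 / 3 : ℝ) := hω ▸ hC ▸
        mul_le_mul (sqrt_pow_ratio_le_one_third r hp3 (by exact_mod_cast he)) hpow
          (by positivity) (by norm_num)
    _ = 3 ^ (-(2 / 3) : ℝ) := by
        rw [show (-(2 / 3) : ℝ) = -1 + 1 / 3 by norm_num, rpow_add (by norm_num), rpow_neg_one,
          one_div]
end
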